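/- arXiv:2103.17212 — 2 statements merged into one kernel-verified Lean document; each statement's English description precedes it below -/
import Mathlib

section
/- For every t > 1/2 there exists a constant C_t > 0, independent of M, such that for all 1-periodic f in the Sobolev space H^t([0,1)), the trapezoidal-rule error satisfies |∫_0^1 f(x) dx − (1/M) ∑_{m=0}^{M-1} f(m/M)| ≤ C_t M^{−t} ‖f‖_{H^t}. -/
open Complex

/-- Squared-summability of Fourier coefficients with Sobolev weight: membership in `H^s`. -/
def InSobolev (s : ℝ) (c : ℤ → ℂ) : Prop :=
  Summable fun m : {m : ℤ // m ≠ 0} => |(m.1 : ℝ)| ^ (2 * s) * ‖c m.1‖ ^ 2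

/-- Periodic Sobolev norm `‖f‖_{H^s} = (|f̂_0|² + ∑_{m≠0} |m|^{2s}|f̂_m|²)^{1/2}`
in terms of the Fourier coefficients `c`. -/
noncomputable def sobolevNorm (s : ℝ) (c : ℤ → ℂ) : ℝ :=
  Real.sqrt (‖c 0‖ ^ 2 + ∑' m : {m : ℤ // m ≠ 0}, |(m.1 : ℝ)| ^ (2 * s) * ‖c m.1‖ ^ 2)

/-!
Since `∑_{m<M} e^{2πikm/M}` is `M` when `M ∣ k` and `0` otherwise, the `M`-point rule applied to
`f = ∑ c_k e^{2πikx}` returns `∑_j c_{jM}`, while the integral is `c_0`. The error is therefore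
`-∑_{j≠0} c_{jM}`, and Cauchy–Schwarz with the weights `|jM|^{±t}` bounds it by
`M^{-t} (∑_{j≠0} |j|^{-2t})^{1/2} ‖f‖_{H^t}`; the sum is finite because `2t > 1`. The same
weighted Cauchy–Schwarz inequality shows that `(c_k)` is absolutely summable, which justifies
all the interchanges of sums and integrals.
-/

open scoped Real

theorem Real.summable_and_tsum_le_sqrt_mul_sqrt_of_weight {ι : Type*} {a w : ι → ℝ}
    (ha : ∀ i, 0 ≤ a i) (hw : ∀ i, 0 < w i) (hw_inv : Summable fun i => (w i)⁻¹)
    (hwa : Summable fun i => w i * a i ^ 2) :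
    Summable a ∧ ∑' i, a i ≤ √(∑' i, (w i)⁻¹) * √(∑' i, w i * a i ^ 2) := by
  have hfactor : ∀ i, √(w i)⁻¹ * (√(w i) * a i) = a i := fun i => by
    rw [← mul_assoc, ← Real.sqrt_mul (inv_nonneg.2 (hw i).le), inv_mul_cancel₀ (hw i).ne',
      Real.sqrt_one, one_mul]
  have hsq_inv : ∀ i, √(w i)⁻¹ ^ (2 : ℝ) = (w i)⁻¹ := fun i => by
    rw [Real.rpow_two, Real.sq_sqrt (inv_nonneg.2 (hw i).le)]
  have hsq : ∀ i, (√(w i) * a i) ^ (2 : ℝ) = w i * a i ^ 2 := fun i => by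
    rw [Real.rpow_two, mul_pow, Real.sq_sqrt (hw i).le]
  have := Real.summable_and_inner_le_Lp_mul_Lq_tsum_of_nonneg Real.HolderConjugate.two_two
    (f := fun i => √(w i)⁻¹) (g := fun i => √(w i) * a i) (fun i => Real.sqrt_nonneg _)
    (fun i => mul_nonneg (Real.sqrt_nonneg _) (ha i)) (by simpa only [hsq_inv] using hw_inv)
    (by simpa only [hsq] using hwa)
  simpa only [hfactor, hsq_inv, hsq, ← Real.sqrt_eq_rpow] using this

theorem Summable.tsum_eq_add_tsum_subtype_ne {α G : Type*} [AddCommGroup G] [TopologicalSpace G]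
    [IsTopologicalAddGroup G] [T2Space G] {g : α → G} (hg : Summable g) (a : α) :
    ∑' x, g x = g a + ∑' x : {x // x ≠ a}, g x := by
  classical
  rw [hg.tsum_eq_add_tsum_ite a, ← tsum_subtype_eq_of_support_subset (s := {x | x ≠ a})]
  · exact congrArg (g a + ·) (tsum_congr fun x => if_neg x.2)
  · intro x hx
    simp_all

theorem norm_exp_two_pi_I_mul (k : ℤ) (x : ℝ) : ‖exp (2 * π * I * k * x)‖ = 1 := by
  rw [show 2 * π * I * k * x = ((2 * π * k * x : ℝ) : ℂ) * I by push_cast; ring]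
  exact norm_exp_ofReal_mul_I _

theorem intervalIntegral_exp_two_pi_I_mul (k : ℤ) :
    ∫ x in (0 : ℝ)..1, exp (2 * π * I * k * x) = if k = 0 then 1 else 0 := by
  split_ifs with hk
  · simp [hk]
  · have hc : 2 * π * I * k ≠ 0 := by simp [hk, Real.pi_ne_zero, I_ne_zero]
    have h1 : exp (2 * π * I * k) = 1 := by
      simpa [mul_comm, mul_assoc, mul_left_comm] using exp_int_mul_two_pi_mul_I k
    rw [integral_exp_mul_complex hc]
    simp [h1]

theorem sum_range_exp_two_pi_I_mul_div {M : ℕ} (hM : M ≠ 0) (k : ℤ) :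
    ∑ m ∈ Finset.range M, exp (2 * π * I * k * ((m / M : ℝ) : ℂ)) =
      if (M : ℤ) ∣ k then (M : ℂ) else 0 := by
  have hζ := isPrimitiveRoot_exp M hM
  have hpow : ∀ m : ℕ,
      exp (2 * π * I * k * ((m / M : ℝ) : ℂ)) = (exp (2 * π * I / M) ^ k) ^ m := fun m => by
    rw [← exp_int_mul, ← exp_nat_mul]
    push_cast
    ring_nf
  simp only [hpow]
  split_ifs with hk
  · simp [(hζ.zpow_eq_one_iff_dvd k).2 hk]
  · rw [geom_sum_eq (mt (hζ.zpow_eq_one_iff_dvd k).1 hk), ← zpow_natCast, ← zpow_mul, mul_comm k,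
      zpow_mul, zpow_natCast, hζ.pow_eq_one, one_zpow, sub_self, zero_div]

section FourierSeries

variable {c : ℤ → ℂ}

theorem summable_mul_exp_two_pi_I_mul (hc : Summable fun k => ‖c k‖) (x : ℝ) :
    Summable fun k : ℤ => c k * exp (2 * π * I * k * x) :=
  Summable.of_norm (by simpa only [norm_mul, norm_exp_two_pi_I_mul, mul_one] using hc)

theorem intervalIntegral_tsum_mul_exp_two_pi_I_mul (hc : Summable fun k => ‖c k‖) :
    ∫ x in (0 : ℝ)..1, ∑' k : ℤ, c k * exp (2 * π * I * k * x) = c 0 := by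
  have hint : ∀ k : ℤ, MeasureTheory.IntegrableOn (fun x : ℝ => c k * exp (2 * π * I * k * x))
      (Set.Ioc 0 1) := fun k => (by fun_prop : Continuous _).integrableOn_Ioc
  have hnorm : ∀ k : ℤ, ∫ x in Set.Ioc (0 : ℝ) 1, ‖c k * exp (2 * π * I * k * x)‖ = ‖c k‖ :=
    fun k => by simp [norm_exp_two_pi_I_mul]
  rw [intervalIntegral.integral_of_le zero_le_one,
    ← MeasureTheory.integral_tsum_of_summable_integral_norm hint (by simpa only [hnorm] using hc)]
  simp only [← intervalIntegral.integral_of_le zero_le_one, intervalIntegral.integral_const_mul,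
    intervalIntegral_exp_two_pi_I_mul, mul_ite, mul_one, mul_zero]
  exact tsum_ite_eq (0 : ℤ) c

theorem quadrature_tsum_mul_exp_two_pi_I_mul (hc : Summable fun k => ‖c k‖) {M : ℕ} (hM : M ≠ 0) :
    (1 / (M : ℂ)) * ∑ m ∈ Finset.range M, ∑' k : ℤ, c k * exp (2 * π * I * k * ((m / M : ℝ) : ℂ))
      = ∑' j : ℤ, c (j * M) := by
  have hMZ : (M : ℤ) ≠ 0 := by exact_mod_cast hM
  have hMC : (M : ℂ) ≠ 0 := by exact_mod_cast hM
  rw [← Summable.tsum_finsetSum fun m _ => summable_mul_exp_two_pi_I_mul hc _, ← tsum_mul_left]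
  simp only [← Finset.mul_sum, sum_range_exp_two_pi_I_mul_div hM, mul_ite, mul_zero,
    mul_left_comm _ (c _), one_div, inv_mul_cancel₀ hMC, mul_one]
  rw [← (mul_left_injective₀ hMZ).tsum_eq]
  · exact tsum_congr fun j => if_pos (dvd_mul_left _ _)
  · intro k hk
    obtain ⟨j, rfl⟩ := not_not.1 fun h => hk (if_neg h)
    exact ⟨j, mul_comm _ _⟩

end FourierSeries

theorem summable_abs_int_rpow_neg_of_ne_zero {b : ℝ} (hb : 1 < b) :
    Summable fun m : {m : ℤ // m ≠ 0} => |(m.1 : ℝ)| ^ (-b) :=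
  (Real.summable_abs_int_rpow hb).subtype _

namespace InSobolev

variable {t : ℝ} {c : ℤ → ℂ}

theorem summable_norm (ht : 1 / 2 < t) (hc : InSobolev t c) : Summable fun k => ‖c k‖ := by
  have hw : ∀ m : {m : ℤ // m ≠ 0}, 0 < |(m.1 : ℝ)| ^ (2 * t) := fun m =>
    Real.rpow_pos_of_pos (abs_pos.2 (Int.cast_ne_zero.2 m.2)) _
  have hw_inv := summable_abs_int_rpow_neg_of_ne_zero (by linarith : 1 < 2 * t)
  simp only [Real.rpow_neg (abs_nonneg _)] at hw_inv
  have hsum :=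
    (Real.summable_and_tsum_le_sqrt_mul_sqrt_of_weight (fun _ => norm_nonneg _) hw hw_inv hc).1
  exact (summable_subtype_and_compl (s := {0})).1 ⟨Summable.of_finite, hsum⟩

theorem norm_tsum_ne_zero_mul_le (ht : 1 / 2 < t) (hc : InSobolev t c) {M : ℕ} (hM : M ≠ 0) :
    ‖∑' j : {j : ℤ // j ≠ 0}, c (j * M)‖ ≤
      √(∑' j : {j : ℤ // j ≠ 0}, |(j.1 : ℝ)| ^ (-(2 * t))) * (M : ℝ) ^ (-t) * sobolevNorm t c := by
  have hMZ : (M : ℤ) ≠ 0 := by exact_mod_cast hM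
  have hMR : (0 : ℝ) < M := by positivity
  let mulM : {j : ℤ // j ≠ 0} → {j : ℤ // j ≠ 0} := fun j => ⟨j.1 * M, mul_ne_zero j.2 hMZ⟩
  have hmulM : Function.Injective mulM := fun i j h =>
    Subtype.ext (mul_left_injective₀ hMZ (congrArg Subtype.val h))
  let w : {j : ℤ // j ≠ 0} → ℝ := fun j => |((mulM j).1 : ℝ)| ^ (2 * t)
  have hw : ∀ j, 0 < w j := fun j =>
    Real.rpow_pos_of_pos (abs_pos.2 (Int.cast_ne_zero.2 (mulM j).2)) _
  have hw_inv : ∀ j, (w j)⁻¹ = (M : ℝ) ^ (-(2 * t)) * |(j.1 : ℝ)| ^ (-(2 * t)) := fun j => by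
    simp only [w, mulM, Int.cast_mul, Int.cast_natCast, abs_mul, Nat.abs_cast,
      Real.mul_rpow (abs_nonneg _) hMR.le, mul_inv, Real.rpow_neg (abs_nonneg _),
      Real.rpow_neg hMR.le, mul_comm]
  obtain ⟨hsum, hle⟩ := Real.summable_and_tsum_le_sqrt_mul_sqrt_of_weight
    (a := fun j => ‖c (mulM j).1‖) (fun _ => norm_nonneg _) hw
    (by simpa only [hw_inv] using
      (summable_abs_int_rpow_neg_of_ne_zero (by linarith : 1 < 2 * t)).mul_left _)
    (hc.comp_injective hmulM)
  have hsqrt : √((M : ℝ) ^ (-(2 * t))) = (M : ℝ) ^ (-t) := by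
    rw [Real.sqrt_eq_rpow, ← Real.rpow_mul hMR.le]
    ring_nf
  have hnorm : √(∑' j, w j * ‖c (mulM j).1‖ ^ 2) ≤ sobolevNorm t c :=
    Real.sqrt_le_sqrt (le_add_of_nonneg_of_le (sq_nonneg _)
      ((hc.comp_injective hmulM).tsum_le_tsum_of_inj mulM hmulM
        (fun _ _ => mul_nonneg (Real.rpow_nonneg (abs_nonneg _) _) (sq_nonneg _))
        (fun _ => le_rfl) hc))
  calc ‖∑' j : {j : ℤ // j ≠ 0}, c (j * M)‖ ≤ ∑' j, ‖c (mulM j).1‖ := norm_tsum_le_tsum_norm hsum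
    _ ≤ √(∑' j, (w j)⁻¹) * √(∑' j, w j * ‖c (mulM j).1‖ ^ 2) := hle
    _ ≤ _ := by
      rw [tsum_congr hw_inv, tsum_mul_left, Real.sqrt_mul' _ (tsum_nonneg fun _ => by positivity),
        hsqrt, mul_comm ((M : ℝ) ^ (-t))]
      gcongr

end InSobolev

/-- for every `t > 1/2` there is `C_t > 0`, independent of `M`, such that
for all 1-periodic `f ∈ H^t`, `|∫₀¹ f − (1/M)∑_{m<M} f(m/M)| ≤ C_t M^{-t} ‖f‖_{H^t}`. -/
theorem trapezoidal_rule_sobolev_error (t : ℝ) (ht : 1 / 2 < t) :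
    ∃ C : ℝ, 0 < C ∧ ∀ (M : ℕ), 0 < M → ∀ (f : ℝ → ℂ) (c : ℤ → ℂ),
      (∀ x : ℝ, f (x + 1) = f x) →
      InSobolev t c →
      (∀ x : ℝ, f x = ∑' k : ℤ, c k * Complex.exp (2 * Real.pi * Complex.I * k * x)) →
      ‖(∫ x in (0:ℝ)..1, f x) - (1 / (M:ℂ)) * ∑ m ∈ Finset.range M, f ((m:ℝ) / M)‖
        ≤ C * (M:ℝ) ^ (-t) * sobolevNorm t c := by
  have hpos : 0 < ∑' j : {j : ℤ // j ≠ 0}, |(j.1 : ℝ)| ^ (-(2 * t)) :=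
    (summable_abs_int_rpow_neg_of_ne_zero (by linarith : 1 < 2 * t)).tsum_pos
      (fun _ => by positivity) ⟨1, one_ne_zero⟩ (by simp)
  refine ⟨_, Real.sqrt_pos.2 hpos, fun M hM f c _ hc hf => ?_⟩
  have hMZ : (M : ℤ) ≠ 0 := by exact_mod_cast hM.ne'
  have habs := hc.summable_norm ht
  have hsplit :=
    (habs.of_norm.comp_injective (mul_left_injective₀ hMZ)).tsum_eq_add_tsum_subtype_ne 0
  simp only [Function.comp_apply, zero_mul] at hsplit
  simp only [hf, intervalIntegral_tsum_mul_exp_two_pi_I_mul habs,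
    quadrature_tsum_mul_exp_two_pi_I_mul habs hM.ne', hsplit, sub_add_cancel_left, norm_neg]
  exact hc.norm_tsum_ne_zero_mul_le ht hM.ne'
end

section
/- For every r ≥ 0 and s > 1/2 there exists a constant C_{r,s} > 0 such that for all 1-periodic u ∈ H^r and w ∈ H^s with max{r,s}-regularity as needed, the pointwise product satisfies ‖uw‖_{H^r} ≤ C_{r,s} (‖u‖_{H^r} ‖w‖_{H^s} + ‖u‖_{H^s} ‖w‖_{H^r}). -/
open Complex

/-!
With `⟨n⟩ = max 1 |n|` one has `⟨n⟩ ^ r ≤ 2 ^ r (⟨n - m⟩ ^ r + ⟨m⟩ ^ r)`, so the `H^r`-weighted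
coefficients of `uw` are dominated by the convolutions `2 ^ r (U * |ŵ| + W * |û|)`, where `U`, `W`
are the `H^r`-weighted coefficient sequences of `u`, `w`. Young's inequality `ℓ² * ℓ¹ ⊆ ℓ²` and the
embedding `H^s ⊆ ℓ¹` for `s > 1/2` (Cauchy–Schwarz against the summable `⟨n⟩ ^ (-2s)`) bound the
two terms by `‖u‖_{H^r} ‖w‖_{H^s}` and `‖w‖_{H^r} ‖u‖_{H^s}`.
-/

section SequenceInequalities

variable {ι : Type*} {f g : ι → ℝ}

theorem summable_mul_and_tsum_mul_le_sqrt (hf : ∀ i, 0 ≤ f i) (hg : ∀ i, 0 ≤ g i)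
    (hf2 : Summable fun i => f i ^ 2) (hg2 : Summable fun i => g i ^ 2) :
    (Summable fun i => f i * g i) ∧
      ∑' i, f i * g i ≤ √(∑' i, f i ^ 2) * √(∑' i, g i ^ 2) := by
  simpa [Real.sqrt_eq_rpow] using Real.summable_and_inner_le_Lp_mul_Lq_tsum_of_nonneg
    Real.HolderConjugate.two_two hf hg (by simpa using hf2) (by simpa using hg2)

theorem summable_sq_add_and_sqrt_tsum_le (hf : ∀ i, 0 ≤ f i) (hg : ∀ i, 0 ≤ g i)
    (hf2 : Summable fun i => f i ^ 2) (hg2 : Summable fun i => g i ^ 2) :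
    (Summable fun i => (f i + g i) ^ 2) ∧
      √(∑' i, (f i + g i) ^ 2) ≤ √(∑' i, f i ^ 2) + √(∑' i, g i ^ 2) := by
  simpa [Real.sqrt_eq_rpow] using Real.Lp_add_le_tsum_of_nonneg
    one_le_two hf hg (by simpa using hf2) (by simpa using hg2)

theorem summable_sq_and_sqrt_tsum_le_of_le {c : ℝ} (hc : 0 ≤ c) (hf : ∀ i, 0 ≤ f i)
    (hfg : ∀ i, f i ≤ c * g i) (hg2 : Summable fun i => g i ^ 2) :
    (Summable fun i => f i ^ 2) ∧ √(∑' i, f i ^ 2) ≤ c * √(∑' i, g i ^ 2) := by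
  have hsq : ∀ i, f i ^ 2 ≤ c ^ 2 * g i ^ 2 := fun i => by
    rw [← mul_pow]; exact pow_le_pow_left₀ (hf i) (hfg i) 2
  have hf2 : Summable fun i => f i ^ 2 :=
    (hg2.mul_left _).of_nonneg_of_le (fun i => sq_nonneg _) hsq
  refine ⟨hf2, ?_⟩
  calc √(∑' i, f i ^ 2) ≤ √(c ^ 2 * ∑' i, g i ^ 2) :=
        Real.sqrt_le_sqrt ((hf2.tsum_le_tsum hsq (hg2.mul_left _)).trans_eq tsum_mul_left)
    _ = c * √(∑' i, g i ^ 2) := by rw [Real.sqrt_mul (sq_nonneg c), Real.sqrt_sq hc]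

theorem le_sqrt_tsum_sq (hf2 : Summable fun i => f i ^ 2) (i : ι) : f i ≤ √(∑' j, f j ^ 2) :=
  Real.le_sqrt_of_sq_le (hf2.le_tsum i fun _ _ => sq_nonneg _)

theorem sq_tsum_mul_le (hf : ∀ i, 0 ≤ f i) (hg : ∀ i, 0 ≤ g i)
    (hfg : Summable fun i => f i ^ 2 * g i) (hg1 : Summable g) :
    (∑' i, f i * g i) ^ 2 ≤ (∑' i, f i ^ 2 * g i) * ∑' i, g i := by
  have hcs := (summable_mul_and_tsum_mul_le_sqrt (f := fun i => f i * √(g i))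
    (g := fun i => √(g i)) (fun i => by have := hf i; positivity) (fun i => by positivity)
    (by simpa [mul_pow, Real.sq_sqrt (hg _)] using hfg)
    (by simpa [Real.sq_sqrt (hg _)] using hg1)).2
  simp only [mul_assoc, Real.mul_self_sqrt (hg _), mul_pow, Real.sq_sqrt (hg _)] at hcs
  calc (∑' i, f i * g i) ^ 2 ≤ (√(∑' i, f i ^ 2 * g i) * √(∑' i, g i)) ^ 2 :=
        pow_le_pow_left₀ (tsum_nonneg fun i => mul_nonneg (hf i) (hg i)) hcs 2
    _ = (∑' i, f i ^ 2 * g i) * ∑' i, g i := by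
        rw [mul_pow, Real.sq_sqrt (tsum_nonneg fun i => by have := hg i; positivity),
          Real.sq_sqrt (tsum_nonneg hg)]

end SequenceInequalities

section Convolution

theorem summable_conv_comm {R : Type*} [CommSemiring R] [TopologicalSpace R]
    (f g : ℤ → R) (n : ℤ) :
    (Summable fun m => f (n - m) * g m) ↔ Summable fun m => g (n - m) * f m := by
  rw [← (Equiv.subLeft n).summable_iff]
  simp [Function.comp_def, mul_comm]

theorem tsum_conv_comm {R : Type*} [CommSemiring R] [TopologicalSpace R]
    (f g : ℤ → R) (n : ℤ) :
    ∑' m, f (n - m) * g m = ∑' m, g (n - m) * f m := by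
  rw [← (Equiv.subLeft n).tsum_eq]
  simp [mul_comm]

variable {f g : ℤ → ℝ}

theorem summable_conv_of_summable_sq (hf : ∀ n, 0 ≤ f n) (hg : ∀ n, 0 ≤ g n)
    (hf2 : Summable fun n => f n ^ 2) (hg1 : Summable g) (n : ℤ) :
    Summable fun m => f (n - m) * g m :=
  (hg1.mul_left _).of_nonneg_of_le (fun m => mul_nonneg (hf _) (hg m))
    fun m => mul_le_mul_of_nonneg_right (le_sqrt_tsum_sq hf2 _) (hg m)

theorem summable_sq_conv_and_sqrt_tsum_le (hf : ∀ n, 0 ≤ f n) (hg : ∀ n, 0 ≤ g n)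
    (hf2 : Summable fun n => f n ^ 2) (hg1 : Summable g) :
    (Summable fun n => (∑' m, f (n - m) * g m) ^ 2) ∧
      √(∑' n, (∑' m, f (n - m) * g m) ^ 2) ≤ √(∑' n, f n ^ 2) * ∑' m, g m := by
  have hF : Summable fun x : ℤ × ℤ => f (x.1 - x.2) ^ 2 * g x.2 := by
    refine (hf2.mul_of_nonneg hg1 (fun _ => sq_nonneg _) hg).comp_injective
      (i := fun x : ℤ × ℤ => (x.1 - x.2, x.2)) fun x y hxy => ?_
    simp only [Prod.mk.injEq] at hxy
    ext <;> omega
  have hD : Summable fun n => ∑' m, f (n - m) ^ 2 * g m := hF.prod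
  have hD_tsum : ∑' n, ∑' m, f (n - m) ^ 2 * g m = (∑' n, f n ^ 2) * ∑' m, g m := by
    calc ∑' n, ∑' m, f (n - m) ^ 2 * g m = ∑' m, ∑' n, f (n - m) ^ 2 * g m :=
          (Summable.tsum_comm (f := fun n m => f (n - m) ^ 2 * g m) hF).symm
      _ = ∑' m, (∑' n, f n ^ 2) * g m := tsum_congr fun m => by
          rw [tsum_mul_right, ← (Equiv.subRight m).tsum_eq (fun n => f n ^ 2)]; rfl
      _ = (∑' n, f n ^ 2) * ∑' m, g m := tsum_mul_left
  have hpt : ∀ n, (∑' m, f (n - m) * g m) ^ 2 ≤ (∑' m, f (n - m) ^ 2 * g m) * ∑' m, g m :=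
    fun n => sq_tsum_mul_le (fun m => hf _) hg (hF.prod_factor n) hg1
  have hsum : Summable fun n => (∑' m, f (n - m) * g m) ^ 2 :=
    (hD.mul_right _).of_nonneg_of_le (fun _ => sq_nonneg _) hpt
  refine ⟨hsum, ?_⟩
  calc √(∑' n, (∑' m, f (n - m) * g m) ^ 2)
      ≤ √((∑' n, f n ^ 2) * (∑' m, g m) ^ 2) := by
        refine Real.sqrt_le_sqrt ?_
        calc _ ≤ ∑' n, (∑' m, f (n - m) ^ 2 * g m) * ∑' m, g m :=
              hsum.tsum_le_tsum hpt (hD.mul_right _)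
          _ = _ := by rw [tsum_mul_right, hD_tsum]; ring
    _ = √(∑' n, f n ^ 2) * ∑' m, g m := by
        rw [Real.sqrt_mul (tsum_nonneg fun _ => sq_nonneg _), Real.sqrt_sq (tsum_nonneg hg)]

end Convolution

theorem Real.add_rpow_le_two_rpow_mul_rpow_add_rpow {a b p : ℝ} (ha : 0 ≤ a) (hb : 0 ≤ b)
    (hp : 0 ≤ p) : (a + b) ^ p ≤ 2 ^ p * (a ^ p + b ^ p) := calc
  (a + b) ^ p ≤ (2 * max a b) ^ p := by
    rw [two_mul]; gcongr <;> [exact le_max_left a b; exact le_max_right a b]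
  _ = 2 ^ p * max (a ^ p) (b ^ p) := by
    rw [Real.mul_rpow zero_le_two (le_max_of_le_left ha), Real.rpow_max ha hb hp]
  _ ≤ 2 ^ p * (a ^ p + b ^ p) := by
    gcongr; exact max_le_add_of_nonneg (by positivity) (by positivity)

/-- On integers this is `1` at `n = 0` and `|n| ^ s` otherwise, the weights of `sobolevNorm`. -/
noncomputable def sobolevWeight (s : ℝ) (n : ℤ) : ℝ := max 1 |(n : ℝ)| ^ s

section SobolevWeight

variable {r s : ℝ}

theorem sobolevWeight_pos (s : ℝ) (n : ℤ) : 0 < sobolevWeight s n :=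
  Real.rpow_pos_of_pos (one_pos.trans_le (le_max_left _ _)) s

theorem one_le_sobolevWeight (hs : 0 ≤ s) (n : ℤ) : 1 ≤ sobolevWeight s n :=
  Real.one_le_rpow (le_max_left _ _) hs

@[simp]
theorem sobolevWeight_zero (s : ℝ) : sobolevWeight s 0 = 1 := by
  simp [sobolevWeight]

theorem sobolevWeight_of_ne_zero (s : ℝ) {n : ℤ} (hn : n ≠ 0) :
    sobolevWeight s n = |(n : ℝ)| ^ s := by
  rw [sobolevWeight, max_eq_right]
  exact_mod_cast Int.one_le_abs hn

theorem sobolevWeight_sq (s : ℝ) (n : ℤ) : sobolevWeight s n ^ 2 = sobolevWeight (2 * s) n := by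
  rw [sobolevWeight, sobolevWeight, mul_comm, Real.rpow_mul (by positivity)]
  norm_cast

theorem sobolevWeight_neg_mul_self (s : ℝ) (n : ℤ) :
    sobolevWeight (-s) n * sobolevWeight s n = 1 := by
  rw [sobolevWeight, sobolevWeight, Real.rpow_neg (by positivity),
    inv_mul_cancel₀ (by positivity)]

theorem sobolevWeight_mono {t : ℝ} (hts : t ≤ s) (n : ℤ) :
    sobolevWeight t n ≤ sobolevWeight s n :=
  Real.rpow_le_rpow_of_exponent_le (le_max_left _ _) hts

theorem sobolevWeight_add_le (hr : 0 ≤ r) (x y : ℤ) :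
    sobolevWeight r (x + y) ≤ 2 ^ r * (sobolevWeight r x + sobolevWeight r y) := by
  have hbracket : max 1 |((x + y : ℤ) : ℝ)| ≤ max 1 |(x : ℝ)| + max 1 |(y : ℝ)| := by
    push_cast
    refine max_le (by linarith [le_max_left 1 |(x : ℝ)|, le_max_left 1 |(y : ℝ)|]) ?_
    exact (abs_add_le _ _).trans (add_le_add (le_max_right _ _) (le_max_right _ _))
  calc sobolevWeight r (x + y) ≤ (max 1 |(x : ℝ)| + max 1 |(y : ℝ)|) ^ r :=
        Real.rpow_le_rpow (by positivity) hbracket hr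
    _ ≤ _ := Real.add_rpow_le_two_rpow_mul_rpow_add_rpow (by positivity) (by positivity) hr

theorem summable_sobolevWeight (hs : s < -1) : Summable (sobolevWeight s) := by
  refine Summable.of_norm_bounded_eventually (g := fun n : ℤ => |(n : ℝ)| ^ s)
    (by simpa using Real.summable_abs_int_rpow (b := -s) (by linarith)) ?_
  filter_upwards [Filter.eventually_cofinite_ne 0] with n hn
  rw [Real.norm_of_nonneg (sobolevWeight_pos s n).le, sobolevWeight_of_ne_zero s hn]

end SobolevWeight

section SobolevSpace

variable {r s : ℝ} {c : ℤ → ℂ}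

theorem inSobolev_iff_summable_sq :
    InSobolev s c ↔ Summable fun n => (sobolevWeight s n * ‖c n‖) ^ 2 := by
  have hterm : ∀ m : {m : ℤ // m ≠ 0},
      |(m.1 : ℝ)| ^ (2 * s) * ‖c m.1‖ ^ 2 = (sobolevWeight s m.1 * ‖c m.1‖) ^ 2 := fun m => by
    rw [mul_pow, sobolevWeight_sq, sobolevWeight_of_ne_zero _ m.2]
  rw [InSobolev, funext hterm]
  exact (Set.finite_singleton (0 : ℤ)).summable_compl_iff
    (f := fun n => (sobolevWeight s n * ‖c n‖) ^ 2)

theorem InSobolev.sobolevNorm_eq (h : InSobolev s c) :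
    sobolevNorm s c = √(∑' n, (sobolevWeight s n * ‖c n‖) ^ 2) := by
  rw [sobolevNorm, (inSobolev_iff_summable_sq.1 h).tsum_eq_add_tsum_ite 0, sobolevWeight_zero,
    one_mul]
  congr 2
  refine (tsum_subtype ({0}ᶜ : Set ℤ) fun n => |(n : ℝ)| ^ (2 * s) * ‖c n‖ ^ 2).trans
    (tsum_congr fun n => ?_)
  by_cases hn : n = 0
  · simp [hn]
  · rw [Set.indicator_of_mem (by simpa using hn), if_neg hn, mul_pow, sobolevWeight_sq,
      sobolevWeight_of_ne_zero _ hn]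

theorem InSobolev.mono {t : ℝ} (hts : t ≤ s) (h : InSobolev s c) : InSobolev t c := by
  rw [inSobolev_iff_summable_sq] at h ⊢
  refine h.of_nonneg_of_le (fun n => sq_nonneg _) fun n => ?_
  exact pow_le_pow_left₀ (mul_nonneg (sobolevWeight_pos t n).le (norm_nonneg _))
    (mul_le_mul_of_nonneg_right (sobolevWeight_mono hts n) (norm_nonneg _)) 2

noncomputable def sobolevEmbeddingConst (s : ℝ) : ℝ := √(∑' n : ℤ, sobolevWeight (-s) n ^ 2)

theorem summable_sobolevWeight_neg_sq (hs : 1 / 2 < s) :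
    Summable fun n : ℤ => sobolevWeight (-s) n ^ 2 := by
  simpa only [sobolevWeight_sq] using summable_sobolevWeight (s := 2 * -s) (by linarith)

theorem sobolevEmbeddingConst_pos (hs : 1 / 2 < s) : 0 < sobolevEmbeddingConst s :=
  Real.sqrt_pos.2 <| one_pos.trans_le <| by
    simpa using (summable_sobolevWeight_neg_sq hs).le_tsum 0 fun n _ => sq_nonneg _

theorem InSobolev.summable_norm_and_tsum_norm_le (hs : 1 / 2 < s) (h : InSobolev s c) :
    (Summable fun n => ‖c n‖) ∧ ∑' n, ‖c n‖ ≤ sobolevEmbeddingConst s * sobolevNorm s c := by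
  have hcs := summable_mul_and_tsum_mul_le_sqrt (fun n => (sobolevWeight_pos (-s) n).le)
    (fun n => mul_nonneg (sobolevWeight_pos s n).le (norm_nonneg (c n)))
    (summable_sobolevWeight_neg_sq hs) (inSobolev_iff_summable_sq.1 h)
  simp only [← mul_assoc, sobolevWeight_neg_mul_self, one_mul] at hcs
  rwa [h.sobolevNorm_eq]

end SobolevSpace

theorem sobolevWeight_mul_norm_tsum_conv_le {r : ℝ} (hr : 0 ≤ r) {a b : ℤ → ℂ} {n : ℤ}
    (ha : Summable fun m => sobolevWeight r (n - m) * ‖a (n - m)‖ * ‖b m‖)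
    (hb : Summable fun m => sobolevWeight r (n - m) * ‖b (n - m)‖ * ‖a m‖) :
    sobolevWeight r n * ‖∑' m, a (n - m) * b m‖ ≤
      2 ^ r * ∑' m, sobolevWeight r (n - m) * ‖a (n - m)‖ * ‖b m‖ +
        2 ^ r * ∑' m, sobolevWeight r (n - m) * ‖b (n - m)‖ * ‖a m‖ := by
  have hb' : Summable fun m => ‖a (n - m)‖ * (sobolevWeight r m * ‖b m‖) :=
    (summable_conv_comm (fun k => ‖a k‖) (fun k => sobolevWeight r k * ‖b k‖) n).2 hb
  have hab : Summable fun m => ‖a (n - m)‖ * ‖b m‖ :=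
    ha.of_nonneg_of_le (fun _ => by positivity) fun m => mul_le_mul_of_nonneg_right
      (le_mul_of_one_le_left (norm_nonneg _) (one_le_sobolevWeight hr _)) (norm_nonneg _)
  have hterm : ∀ m, sobolevWeight r n * (‖a (n - m)‖ * ‖b m‖) ≤
      2 ^ r * (sobolevWeight r (n - m) * ‖a (n - m)‖ * ‖b m‖) +
        2 ^ r * (‖a (n - m)‖ * (sobolevWeight r m * ‖b m‖)) := fun m => by
    have hW := sobolevWeight_add_le hr (n - m) m
    rw [sub_add_cancel] at hW
    calc _ ≤ 2 ^ r * (sobolevWeight r (n - m) + sobolevWeight r m) * (‖a (n - m)‖ * ‖b m‖) :=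
          mul_le_mul_of_nonneg_right hW (by positivity)
      _ = _ := by ring
  calc sobolevWeight r n * ‖∑' m, a (n - m) * b m‖
      ≤ sobolevWeight r n * ∑' m, ‖a (n - m)‖ * ‖b m‖ := by
        refine mul_le_mul_of_nonneg_left ?_ (sobolevWeight_pos r n).le
        simpa only [norm_mul] using norm_tsum_le_tsum_norm (f := fun m => a (n - m) * b m)
          (by simpa only [norm_mul] using hab)
    _ = ∑' m, sobolevWeight r n * (‖a (n - m)‖ * ‖b m‖) := tsum_mul_left.symm
    _ ≤ ∑' m, (2 ^ r * (sobolevWeight r (n - m) * ‖a (n - m)‖ * ‖b m‖) +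
          2 ^ r * (‖a (n - m)‖ * (sobolevWeight r m * ‖b m‖))) :=
        (hab.mul_left _).tsum_le_tsum hterm ((ha.mul_left _).add (hb'.mul_left _))
    _ = 2 ^ r * ∑' m, sobolevWeight r (n - m) * ‖a (n - m)‖ * ‖b m‖ +
          2 ^ r * ∑' m, ‖a (n - m)‖ * (sobolevWeight r m * ‖b m‖) := by
        rw [(ha.mul_left _).tsum_add (hb'.mul_left _), tsum_mul_left, tsum_mul_left]
    _ = _ := by
        rw [tsum_conv_comm (fun k => ‖a k‖) (fun k => sobolevWeight r k * ‖b k‖) n]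

theorem sobolevNorm_conv_le {r s : ℝ} (hr : 0 ≤ r) (hs : 1 / 2 < s) {a b p : ℤ → ℂ}
    (har : InSobolev r a) (has : InSobolev s a) (hbr : InSobolev r b) (hbs : InSobolev s b)
    (hp : ∀ n, p n = ∑' m, a (n - m) * b m) :
    sobolevNorm r p ≤ 2 ^ r * sobolevEmbeddingConst s *
      (sobolevNorm r a * sobolevNorm s b + sobolevNorm s a * sobolevNorm r b) := by
  set A := fun n => sobolevWeight r n * ‖a n‖
  set B := fun n => sobolevWeight r n * ‖b n‖
  have hA : ∀ n, 0 ≤ A n := fun n => mul_nonneg (sobolevWeight_pos r n).le (norm_nonneg _)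
  have hB : ∀ n, 0 ≤ B n := fun n => mul_nonneg (sobolevWeight_pos r n).le (norm_nonneg _)
  have hA2 : Summable fun n => A n ^ 2 := inSobolev_iff_summable_sq.1 har
  have hB2 : Summable fun n => B n ^ 2 := inSobolev_iff_summable_sq.1 hbr
  obtain ⟨ha1, ha1_le⟩ := has.summable_norm_and_tsum_norm_le hs
  obtain ⟨hb1, hb1_le⟩ := hbs.summable_norm_and_tsum_norm_le hs
  obtain ⟨hAb2, hAb⟩ := summable_sq_conv_and_sqrt_tsum_le hA (fun n => norm_nonneg (b n)) hA2 hb1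
  obtain ⟨hBa2, hBa⟩ := summable_sq_conv_and_sqrt_tsum_le hB (fun n => norm_nonneg (a n)) hB2 ha1
  obtain ⟨hsum2, hsum⟩ := summable_sq_add_and_sqrt_tsum_le
    (fun n => tsum_nonneg fun m => mul_nonneg (hA _) (norm_nonneg (b m)))
    (fun n => tsum_nonneg fun m => mul_nonneg (hB _) (norm_nonneg (a m))) hAb2 hBa2
  obtain ⟨hp2, hp_le⟩ := summable_sq_and_sqrt_tsum_le_of_le (c := 2 ^ r) (by positivity)
    (fun n => mul_nonneg (sobolevWeight_pos r n).le (norm_nonneg (p n)))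
    (fun n => by
      rw [hp n, mul_add]
      exact sobolevWeight_mul_norm_tsum_conv_le hr
        (summable_conv_of_summable_sq hA (fun m => norm_nonneg (b m)) hA2 hb1 n)
        (summable_conv_of_summable_sq hB (fun m => norm_nonneg (a m)) hB2 ha1 n)) hsum2
  rw [(inSobolev_iff_summable_sq.2 hp2).sobolevNorm_eq, har.sobolevNorm_eq, hbr.sobolevNorm_eq]
  calc _ ≤ 2 ^ r * (√(∑' n, (∑' m, A (n - m) * ‖b m‖) ^ 2) +
          √(∑' n, (∑' m, B (n - m) * ‖a m‖) ^ 2)) := hp_le.trans (by gcongr)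
    _ ≤ 2 ^ r * (√(∑' n, A n ^ 2) * ∑' m, ‖b m‖ + √(∑' n, B n ^ 2) * ∑' m, ‖a m‖) := by
        gcongr
    _ ≤ 2 ^ r * (√(∑' n, A n ^ 2) * (sobolevEmbeddingConst s * sobolevNorm s b) +
          √(∑' n, B n ^ 2) * (sobolevEmbeddingConst s * sobolevNorm s a)) := by
        gcongr
    _ = _ := by ring

/-- for `r ≥ 0` and `s > 1/2` there is `C_{r,s} > 0` such that for all
1-periodic `u, w ∈ H^{max{r,s}}` the pointwise product `uw` (whose Fourier coefficients
are the convolution `p n = ∑_m u_{n-m} w_m`) satisfies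
`‖uw‖_{H^r} ≤ C (‖u‖_{H^r}‖w‖_{H^s} + ‖u‖_{H^s}‖w‖_{H^r})`. -/
theorem sobolev_product_estimate (r s : ℝ) (hr : 0 ≤ r) (hs : 1 / 2 < s) :
    ∃ C : ℝ, 0 < C ∧ ∀ (a b p : ℤ → ℂ),
      InSobolev (max r s) a → InSobolev (max r s) b →
      (∀ n : ℤ, p n = ∑' m : ℤ, a (n - m) * b m) →
      sobolevNorm r p ≤ C * (sobolevNorm r a * sobolevNorm s b
        + sobolevNorm s a * sobolevNorm r b) :=
  ⟨2 ^ r * sobolevEmbeddingConst s, by have := sobolevEmbeddingConst_pos hs; positivity,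
    fun _ _ _ ha hb hp => sobolevNorm_conv_le hr hs (ha.mono (le_max_left r s))
      (ha.mono (le_max_right r s)) (hb.mono (le_max_left r s)) (hb.mono (le_max_right r s)) hp⟩
end
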